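/- arXiv:2603.17177 — 2 statements merged into one kernel-verified Lean document; each statement's English description precedes it below -/
import Mathlib

section
/- For every N ∈ ℕ, every 0 ≤ n ≤ N, and every g : Λ^N → ℝ with Q_N g = 0: S_{N−n}Q_{N−n}(G_N g) = L^{2(N−n)} · G_n(S_{N−n}Q_{N−n} g), where on the right-hand side G_n := Σ_{k=1}^n L^{2(k−1)} P_k acts on functions on Λ^n (note that S_{N−n}Q_{N−n} g : Λ^n → ℝ again has zero mean). -/
open MeasureTheory ProbabilityTheory Filter

namespace Hier

/-! ## The hierarchical lattice

A point of the unit lattice `Λ^N = (ℤ/L^Nℤ)^d` (for `L` odd) is encoded by its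
balanced base-`L` digits: the coordinate `i` of the point is
`∑_{k<N} L^k · (x i k)`, where the digit `x i k ∈ ZMod L` is identified with its
representative in `{-(L-1)/2, …, (L-1)/2}`.  The level-`n` block `B_n(x)` is the
set of points sharing with `x` all digits of index `≥ n`, and the centre of a
level-`n` block is the point all of whose digits of index `< n` vanish. -/

variable (L d : ℕ)

/-- A point of the unit lattice `Λ^N`, in hierarchical digit coordinates. -/
abbrev Pt (N : ℕ) : Type := Fin d → Fin N → ZMod L

/-- Transport along an equality of lattice sizes. -/
def reindex {M M' : ℕ} (h : M = M') (z : Pt L d M) : Pt L d M' :=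
  fun i k => z i (Fin.cast h.symm k)

/-- Replace the `n` lowest digits of `x` by `a`; as `a` varies this enumerates
the level-`n` block `B_n(x)` of `x`. -/
def paste {N n : ℕ} (hn : n ≤ N) (x : Pt L d N) (a : Fin d → Fin n → ZMod L) :
    Pt L d N :=
  fun i k => if h : (k : ℕ) < n then a i ⟨k, h⟩ else x i k

/-- The centre of the level-`m` block of `Λ^N` indexed by `z ∈ Λ^{N-m}` (the
point `L^m z`). -/
def embed {N m : ℕ} (hm : m ≤ N) (z : Pt L d (N - m)) : Pt L d N :=
  fun i k =>
    if h : m ≤ (k : ℕ) then z i ⟨(k : ℕ) - m, by have := k.isLt; omega⟩ else 0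

variable [NeZero L]

/-- The averaging operator `Q_n g (x) = L^{-nd} ∑_{y ∈ B_n(x)} g(y)`. -/
noncomputable def Qop {N : ℕ} (n : ℕ) (hn : n ≤ N) (g : Pt L d N → ℝ) :
    Pt L d N → ℝ :=
  fun x => ((L : ℝ) ^ (n * d))⁻¹ * ∑ a : Fin d → Fin n → ZMod L, g (paste L d hn x a)

/-- The fluctuation operator `P_n = Q_{n-1} - Q_n` (for `1 ≤ n ≤ N`). -/
noncomputable def Pop {N : ℕ} (n : ℕ) (hn : n ≤ N) (g : Pt L d N → ℝ) :
    Pt L d N → ℝ :=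
  fun x => Qop L d (n - 1) (le_trans (Nat.sub_le n 1) hn) g x - Qop L d n hn g x

/-- The rescaling `S_m`, sending `f : Λ^N → ℝ` to `S_m f : Λ^{N-m} → ℝ`,
`(S_m f)(z) = f(L^m z)`.  In particular `scale … (Qop …)` is the coarse
graining `S_m Q_m`. -/
noncomputable def scale {N m : ℕ} (hm : m ≤ N) (f : Pt L d N → ℝ) :
    Pt L d (N - m) → ℝ :=
  fun z => f (embed L d hm z)

/-- The hierarchical Green operator `G_N = ∑_{k=1}^N L^{2(k-1)} P_k`. -/
noncomputable def green (N : ℕ) (g : Pt L d N → ℝ) : Pt L d N → ℝ :=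
  fun x => ∑ k : Fin N, (L : ℝ) ^ (2 * (k : ℕ)) * Pop L d ((k : ℕ) + 1) k.isLt g x

/-- The (negative of the) hierarchical Laplacian
`(-Δ_{H,N}) = ∑_{n=1}^N L^{-2(n-1)} P_n`. -/
noncomputable def lap (N : ℕ) (g : Pt L d N → ℝ) : Pt L d N → ℝ :=
  fun x => ∑ k : Fin N, ((L : ℝ) ^ (2 * (k : ℕ)))⁻¹ * Pop L d ((k : ℕ) + 1) k.isLt g x

/-- The fluctuation propagator `Γ_m = ∑_{k=1}^m L^{2(k-1)} P_k` acting on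
functions on `Λ^N` (`m ≤ N`). -/
noncomputable def gammaProp {N : ℕ} (m : ℕ) (hm : m ≤ N) (g : Pt L d N → ℝ) :
    Pt L d N → ℝ :=
  fun x => ∑ k : Fin m, (L : ℝ) ^ (2 * (k : ℕ)) *
    Pop L d ((k : ℕ) + 1) (le_trans k.isLt hm) g x

/-- `x` and `y` lie in the same level-`m` block of `Λ^N`. -/
def sameBlock {N : ℕ} (m : ℕ) (x y : Pt L d N) : Prop :=
  ∀ (i : Fin d) (k : Fin N), m ≤ (k : ℕ) → x i k = y i k

end Hier


/-! The block averages are nested, `Q_q Q_p = Q_{max p q}`, so `Q_m P_k` is `P_k` for `k > m`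
and `0` for `k ≤ m`: thus `Q_m G_N = ∑_{k > m} L^{2(k-1)} P_k`. Coarse graining intertwines the
averages, `Q_j S_m Q_m = S_m Q_{m+j}`, hence `P_j S_m Q_m = S_m P_{m+j}`, and the shift of the
summation index `k = m + j` produces the factor `L^{2m}`. -/

open Finset

lemma Fin.sum_univ_ite_le {M : Type*} [AddCommMonoid M] {N m : ℕ} (hm : m ≤ N)
    (F : Fin N → M) :
    ∑ k : Fin N, (if m ≤ (k : ℕ) then F k else 0) = ∑ j : Fin (N - m), F ⟨m + j, by omega⟩ := by
  rw [← Fintype.sum_equiv (finCongr (show m + (N - m) = N by omega)) _ _ fun _ => rfl,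
    Fin.sum_univ_add, sum_eq_zero fun k _ => if_neg (not_le.mpr k.isLt), zero_add]
  exact sum_congr rfl fun j _ => if_pos (Nat.le_add_right m j)

namespace Hier

variable {L d : ℕ}

section Digits

def lowDigits {p q : ℕ} (hpq : p ≤ q) (a : Fin d → Fin q → ZMod L) : Fin d → Fin p → ZMod L :=
  fun i t => a i (Fin.castLE hpq t)

lemma paste_paste {N p q : ℕ} (hpq : p ≤ q) (hq : q ≤ N) (x : Pt L d N)
    (a : Fin d → Fin q → ZMod L) (b : Fin d → Fin p → ZMod L) :
    paste L d (hpq.trans hq) (paste L d hq x a) b = paste L d hq x (paste L d hpq a b) := by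
  funext i k
  simp only [paste]
  split_ifs <;> first | rfl | omega

lemma paste_lowDigits_involutive {p q : ℕ} (hpq : p ≤ q) :
    Function.Involutive fun ab : (Fin d → Fin q → ZMod L) × (Fin d → Fin p → ZMod L) =>
      (paste L d hpq ab.1 ab.2, lowDigits hpq ab.1) := by
  rintro ⟨a, b⟩
  ext i k
  · simp only [paste]
    split_ifs <;> rfl
  · simp [paste, lowDigits]

lemma paste_embed_paste {N m j : ℕ} (hm : m ≤ N) (hj : j ≤ N - m) (w : Pt L d (N - m))
    (c : Fin d → Fin j → ZMod L) (b : Fin d → Fin m → ZMod L) :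
    paste L d hm (embed L d hm (paste L d hj w c)) b
      = paste L d (by omega) (embed L d hm w) (fun i => Fin.append (b i) (c i)) := by
  funext i k
  simp only [paste, embed, Fin.append, Fin.addCases]
  split_ifs <;> first | rfl | omega | simp_all

end Digits

section Averaging

variable [NeZero L]

lemma card_digits (p : ℕ) :
    (Fintype.card (Fin d → Fin p → ZMod L) : ℝ) = (L : ℝ) ^ (p * d) := by
  simp [ZMod.card, ← pow_mul, mul_comm]

lemma sum_digits_const (p : ℕ) (r : ℝ) :
    ((L : ℝ) ^ (p * d))⁻¹ * ∑ _a : Fin d → Fin p → ZMod L, r = r := by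
  rw [sum_const, card_univ, nsmul_eq_mul, card_digits, inv_mul_cancel_left₀]
  exact pow_ne_zero _ (Nat.cast_ne_zero.mpr (NeZero.ne L))

lemma Qop_eq_self_of_forall_paste {N p : ℕ} (hp : p ≤ N) {f : Pt L d N → ℝ} {x : Pt L d N}
    (h : ∀ a, f (paste L d hp x a) = f x) : Qop L d p hp f x = f x := by
  simp only [Qop, h, sum_digits_const]

lemma Qop_congr_of_sameBlock {N p : ℕ} (hp : p ≤ N) (g : Pt L d N → ℝ) {x y : Pt L d N}
    (h : sameBlock L d p x y) : Qop L d p hp g x = Qop L d p hp g y := by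
  have hxy : ∀ a, paste L d hp x a = paste L d hp y a := fun a => by
    funext i k
    simp only [paste]
    split_ifs with hk
    · rfl
    · exact h i k (by omega)
  simp only [Qop, hxy]

lemma Qop_Qop_of_le {N p q : ℕ} (hqp : q ≤ p) (hp : p ≤ N) (g : Pt L d N → ℝ) (x : Pt L d N) :
    Qop L d q (hqp.trans hp) (Qop L d p hp g) x = Qop L d p hp g x :=
  Qop_eq_self_of_forall_paste _ fun a => Qop_congr_of_sameBlock hp g fun i k hk => by
    simp [paste, Nat.not_lt.mpr (hqp.trans hk)]

lemma Qop_Qop_of_ge {N p q : ℕ} (hpq : p ≤ q) (hq : q ≤ N) (g : Pt L d N → ℝ) (x : Pt L d N) :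
    Qop L d q hq (Qop L d p (hpq.trans hq) g) x = Qop L d q hq g x := by
  -- `(a, b) ↦ (paste a b, lowDigits a)` permutes the pairs of digit blocks, so the double sum
  -- counts each point of the level-`q` block `L^{pd}` times.
  have hperm := Fintype.sum_equiv (paste_lowDigits_involutive (L := L) (d := d) hpq).toPerm
    (fun ab => g (paste L d hq x (paste L d hpq ab.1 ab.2))) (fun ab => g (paste L d hq x ab.1))
    fun _ => rfl
  simp only [Fintype.sum_prod_type] at hperm
  simp only [Qop, paste_paste hpq hq, ← mul_sum, ← mul_assoc]
  rw [hperm, mul_assoc, sum_comm, sum_digits_const]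

lemma Qop_sub {N p : ℕ} (hp : p ≤ N) (f g : Pt L d N → ℝ) (x : Pt L d N) :
    Qop L d p hp (fun y => f y - g y) x = Qop L d p hp f x - Qop L d p hp g x := by
  simp only [Qop, sum_sub_distrib, mul_sub]

lemma Qop_const_mul {N p : ℕ} (hp : p ≤ N) (r : ℝ) (f : Pt L d N → ℝ) (x : Pt L d N) :
    Qop L d p hp (fun y => r * f y) x = r * Qop L d p hp f x := by
  simp only [Qop, ← mul_sum]
  ring

lemma Qop_sum {N p : ℕ} (hp : p ≤ N) {ι : Type*} (s : Finset ι) (f : ι → Pt L d N → ℝ)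
    (x : Pt L d N) :
    Qop L d p hp (fun y => ∑ k ∈ s, f k y) x = ∑ k ∈ s, Qop L d p hp (f k) x := by
  simp only [Qop, mul_sum]
  exact sum_comm

lemma Pop_succ {N k : ℕ} (hk : k + 1 ≤ N) (g : Pt L d N → ℝ) :
    Pop L d (k + 1) hk g = fun y => Qop L d k (by omega) g y - Qop L d (k + 1) hk g y :=
  rfl

lemma Qop_Pop {N p k : ℕ} (hp : p ≤ N) (hk : k + 1 ≤ N) (g : Pt L d N → ℝ) (x : Pt L d N) :
    Qop L d p hp (Pop L d (k + 1) hk g) x = if p ≤ k then Pop L d (k + 1) hk g x else 0 := by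
  rw [Pop_succ, Qop_sub]
  split_ifs with hpk
  · rw [Qop_Qop_of_le hpk, Qop_Qop_of_le (by omega)]
  · rw [Qop_Qop_of_ge (by omega), Qop_Qop_of_ge (by omega), sub_self]

lemma Qop_scale_Qop {N m j : ℕ} (hm : m ≤ N) (hj : j ≤ N - m) (g : Pt L d N → ℝ)
    (w : Pt L d (N - m)) :
    Qop L d j hj (scale L d hm (Qop L d m hm g)) w
      = Qop L d (m + j) (by omega) g (embed L d hm w) := by
  have happend := Fintype.sum_equiv
    ((Equiv.arrowProdEquivProdArrow (Fin d) _ _).symm.trans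
      (Equiv.piCongrRight fun _ => Fin.appendEquiv (α := ZMod L) m j))
    (fun bc => g (paste L d (by omega) (embed L d hm w) fun i => Fin.append (bc.1 i) (bc.2 i)))
    (fun A => g (paste L d (by omega) (embed L d hm w) A)) fun _ => rfl
  rw [Fintype.sum_prod_type_right] at happend
  simp only [Qop, scale, paste_embed_paste hm hj, ← mul_sum, ← mul_assoc]
  rw [happend, ← mul_inv, ← pow_add, ← add_mul, add_comm j]

lemma Pop_scale_Qop {N m j : ℕ} (hm : m ≤ N) (hj : j + 1 ≤ N - m) (g : Pt L d N → ℝ)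
    (w : Pt L d (N - m)) :
    Pop L d (j + 1) hj (scale L d hm (Qop L d m hm g)) w
      = Pop L d (m + j + 1) (by omega) g (embed L d hm w) :=
  congrArg₂ (· - ·) (Qop_scale_Qop hm (by omega) g w) (Qop_scale_Qop hm hj g w)

lemma Qop_green {N m : ℕ} (hm : m ≤ N) (g : Pt L d N → ℝ) (x : Pt L d N) :
    Qop L d m hm (green L d N g) x
      = ∑ j : Fin (N - m), (L : ℝ) ^ (2 * (m + j)) * Pop L d (m + j + 1) (by omega) g x := by
  unfold green
  rw [Qop_sum]
  simp only [Qop_const_mul, Qop_Pop, mul_ite, mul_zero]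
  exact Fin.sum_univ_ite_le hm _

lemma scale_Qop_green {N m : ℕ} (hm : m ≤ N) (g : Pt L d N → ℝ) (w : Pt L d (N - m)) :
    scale L d hm (Qop L d m hm (green L d N g)) w
      = (L : ℝ) ^ (2 * m) * green L d (N - m) (scale L d hm (Qop L d m hm g)) w := by
  simp only [scale, Qop_green, green, Pop_scale_Qop, mul_sum, pow_add, mul_add, mul_assoc]

lemma green_reindex {M M' : ℕ} (h : M = M') (f : Pt L d M' → ℝ) (z : Pt L d M) :
    green L d M (fun w => f (reindex L d h w)) z = green L d M' f (reindex L d h z) := by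
  subst h
  rfl

end Averaging

end Hier

open Hier in
/-- For every `N ∈ ℕ`, every `0 ≤ n ≤ N` and every
`g : Λ^N → ℝ` with `Q_N g = 0`:
`S_{N-n} Q_{N-n} (G_N g) = L^{2(N-n)} · G_n (S_{N-n} Q_{N-n} g)`,
where the right-hand Green operator `G_n` acts on functions on `Λ^n`
(identified with `Λ^{N-(N-n)}` via `reindex`). -/
theorem statement_3 (L d : ℕ) [NeZero L]
    (N n : ℕ) (hn : n ≤ N) (g : Pt L d N → ℝ) :
    ∀ z : Pt L d n,
      scale L d (Nat.sub_le N n)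
          (Qop L d (N - n) (Nat.sub_le N n) (green L d N g))
          (reindex L d (show n = N - (N - n) by omega) z) =
        (L : ℝ) ^ (2 * (N - n)) *
          green L d n (fun w : Pt L d n =>
            scale L d (Nat.sub_le N n)
              (Qop L d (N - n) (Nat.sub_le N n) g)
              (reindex L d (show n = N - (N - n) by omega) w)) z := by
  intro z
  rw [green_reindex, scale_Qop_green]
end

section
/- Define Γ_m := Σ_{k=1}^m L^{2(k−1)} P_k for 0 ≤ m ≤ N. Then for every 0 ≤ n < N and every x ∈ Λ^N: E[ (Q_{N−n}(ξ · Γ_{N−n}ξ))(x) ] = (1 − L^{−d}) Σ_{k=1}^{N−n} L^{(2−d)(k−1)}, where ξ · Γ_{N−n}ξ denotes the pointwise product y ↦ ξ(y)·(Γ_{N−n}ξ)(y). In particular, for N ≥ 1 and every x ∈ Λ^N: E[ (Q_1(ξ · P_1 ξ))(x) ] = 1 − L^{−d} and E[ ξ(x)·(P_1 ξ)(x) ] = 1 − L^{−d}. -/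
open MeasureTheory ProbabilityTheory Filter

/-! All operators involved (`Q_n`, `P_n`, `Γ_m`) are linear, and expectation commutes with
linear maps on the finite-dimensional space of fields. Since white noise has identity
covariance, `E[ξ(y) (Aξ)(y)] = (A δ_y)(y)` for every linear `A`. For `A = Q_n` this diagonal
entry is `L^{-nd}`, as `y` is one of the `L^{nd}` points of its block; hence `P_{k+1}`
contributes `(1 - L^{-d}) L^{-kd}` and `Γ_m` the sum on the right. The diagonal entry does not
depend on `y`, and `Q_n` fixes constant fields, which gives the outer average. -/

section StandardGaussian

variable {Ω : Type*} [MeasurableSpace Ω] {P : Measure Ω} {X : Ω → ℝ}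

lemma memLp_two_of_map_eq_gaussianReal (hX : AEMeasurable X P)
    (h : P.map X = gaussianReal 0 1) : MemLp X 2 P := by
  have : MemLp id 2 (P.map X) := h ▸ memLp_id_gaussianReal 2
  exact (memLp_map_measure_iff aestronglyMeasurable_id hX).mp this

lemma integral_eq_zero_of_map_eq_gaussianReal (hX : AEMeasurable X P)
    (h : P.map X = gaussianReal 0 1) : P[X] = 0 := by
  calc P[X] = ∫ x, id x ∂P.map X := (integral_map hX aestronglyMeasurable_id).symm
    _ = 0 := by rw [h]; exact integral_id_gaussianReal

lemma variance_eq_one_of_map_eq_gaussianReal (hX : AEMeasurable X P)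
    (h : P.map X = gaussianReal 0 1) : Var[X; P] = 1 := by
  rw [← variance_id_map hX, h]
  exact variance_id_gaussianReal

end StandardGaussian

lemma mul_linearMap_apply {ι ι' : Type*} (A : (ι → ℝ) →ₗ[ℝ] (ι' → ℝ)) (c : ℝ) (g : ι → ℝ)
    (x : ι') : c * A g x = A (fun j => c * g j) x := by
  rw [← smul_eq_mul, ← Pi.smul_apply c (A g) x, ← map_smul]
  rfl

section FiniteFamily

variable {ι ι' Ω : Type*} [MeasurableSpace Ω] {P : Measure Ω}

lemma integral_mul_eq_single [DecidableEq ι] {ξ : ι → Ω → ℝ} (hmem : ∀ i, MemLp (ξ i) 2 P)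
    (hmean : ∀ i, P[ξ i] = 0) (hvar : ∀ i, Var[ξ i; P] = 1)
    (hindep : Pairwise fun i j => ξ i ⟂ᵢ[P] ξ j) (i : ι) :
    (fun j => ∫ ω, ξ i ω * ξ j ω ∂P) = Pi.single i 1 := by
  funext j
  have hcov : ∫ ω, ξ i ω * ξ j ω ∂P = cov[ξ i, ξ j; P] := by
    simp [covariance, hmean]
  rw [hcov, Pi.single_apply]
  split_ifs with hji
  · rw [hji, covariance_self (hmem i).aemeasurable, hvar]
  · exact (hindep (Ne.symm hji)).covariance_eq_zero (hmem i) (hmem j)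

variable [Fintype ι]

lemma integrable_linearMap_apply {F : ι → Ω → ℝ} (A : (ι → ℝ) →ₗ[ℝ] (ι' → ℝ))
    (hF : ∀ i, Integrable (F i) P) (x : ι') :
    Integrable (fun ω => A (fun i => F i ω) x) P :=
  ((LinearMap.proj x ∘ₗ A).toContinuousLinearMap).integrable_comp (Integrable.of_eval hF)

lemma integral_linearMap_apply {F : ι → Ω → ℝ} (A : (ι → ℝ) →ₗ[ℝ] (ι' → ℝ))
    (hF : ∀ i, Integrable (F i) P) (x : ι') :
    ∫ ω, A (fun i => F i ω) x ∂P = A (fun i => ∫ ω, F i ω ∂P) x := by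
  have hcomm := ((LinearMap.proj x ∘ₗ A).toContinuousLinearMap).integral_comp_comm
    (Integrable.of_eval hF)
  have heval : ∫ ω, (fun i => F i ω) ∂P = fun i => ∫ ω, F i ω ∂P :=
    funext (eval_integral hF)
  rw [heval] at hcomm
  exact hcomm

variable {ξ : ι → Ω → ℝ}

lemma integrable_mul_linearMap_apply (A : (ι → ℝ) →ₗ[ℝ] (ι' → ℝ)) {i : ι}
    (hprod : ∀ j, Integrable (fun ω => ξ i ω * ξ j ω) P) (x : ι') :
    Integrable (fun ω => ξ i ω * A (fun j => ξ j ω) x) P := by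
  simp_rw [mul_linearMap_apply]
  exact integrable_linearMap_apply A hprod x

lemma integral_mul_linearMap_apply (A : (ι → ℝ) →ₗ[ℝ] (ι' → ℝ)) {i : ι}
    (hprod : ∀ j, Integrable (fun ω => ξ i ω * ξ j ω) P) (x : ι') :
    ∫ ω, ξ i ω * A (fun j => ξ j ω) x ∂P = A (fun j => ∫ ω, ξ i ω * ξ j ω ∂P) x := by
  simp_rw [mul_linearMap_apply]
  exact integral_linearMap_apply A hprod x

end FiniteFamily

namespace Hier

variable {L d N : ℕ}

lemma paste_eq_self_iff {n : ℕ} (hn : n ≤ N) (y : Pt L d N) (a : Fin d → Fin n → ZMod L) :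
    paste L d hn y a = y ↔ a = fun i (k : Fin n) => y i ⟨k, lt_of_lt_of_le k.isLt hn⟩ := by
  constructor
  · rintro h
    funext i k
    simpa [paste] using congrFun (congrFun h i) ⟨k, lt_of_lt_of_le k.isLt hn⟩
  · rintro rfl
    funext i k
    by_cases hk : (k : ℕ) < n <;> simp [paste, hk]

variable [NeZero L]

noncomputable def QopLin (n : ℕ) (hn : n ≤ N) : (Pt L d N → ℝ) →ₗ[ℝ] (Pt L d N → ℝ) where
  toFun := Qop L d n hn
  map_add' f g := by
    funext x
    simp only [Qop, Pi.add_apply, Finset.sum_add_distrib, mul_add]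
  map_smul' c f := by
    funext x
    simp only [Qop, Pi.smul_apply, smul_eq_mul, RingHom.id_apply, Finset.mul_sum]
    exact Finset.sum_congr rfl fun _ _ => by ring

noncomputable def PopLin (n : ℕ) (hn : n ≤ N) : (Pt L d N → ℝ) →ₗ[ℝ] (Pt L d N → ℝ) :=
  QopLin (n - 1) (le_trans (Nat.sub_le n 1) hn) - QopLin n hn

noncomputable def gammaPropLin (m : ℕ) (hm : m ≤ N) : (Pt L d N → ℝ) →ₗ[ℝ] (Pt L d N → ℝ) :=
  ∑ k : Fin m, (L : ℝ) ^ (2 * (k : ℕ)) • PopLin ((k : ℕ) + 1) (le_trans k.isLt hm)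

lemma QopLin_apply (n : ℕ) (hn : n ≤ N) (g : Pt L d N → ℝ) : QopLin n hn g = Qop L d n hn g :=
  rfl

lemma PopLin_apply (n : ℕ) (hn : n ≤ N) (g : Pt L d N → ℝ) : PopLin n hn g = Pop L d n hn g :=
  rfl

lemma gammaPropLin_apply (m : ℕ) (hm : m ≤ N) (g : Pt L d N → ℝ) :
    gammaPropLin m hm g = gammaProp L d m hm g := by
  funext x
  simp [gammaPropLin, gammaProp, PopLin_apply]

lemma Qop_const (n : ℕ) (hn : n ≤ N) (c : ℝ) (x : Pt L d N) :
    Qop L d n hn (fun _ => c) x = c := by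
  have hL : (L : ℝ) ≠ 0 := Nat.cast_ne_zero.mpr (NeZero.ne L)
  simp only [Qop, mul_comm n d, Finset.sum_const, Finset.card_univ, Fintype.card_pi, ZMod.card,
    Finset.prod_const, Fintype.card_fin, ← pow_mul, nsmul_eq_mul, Nat.cast_pow]
  field_simp

lemma Qop_single_self (n : ℕ) (hn : n ≤ N) (y : Pt L d N) :
    Qop L d n hn (Pi.single y 1) y = ((L : ℝ) ^ (n * d))⁻¹ := by
  simp only [Qop, Pi.single_apply, paste_eq_self_iff, Finset.sum_ite_eq', Finset.mem_univ,
    if_true, mul_one]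

lemma Pop_succ_single_self (k : ℕ) (hk : k + 1 ≤ N) (y : Pt L d N) :
    Pop L d (k + 1) hk (Pi.single y 1) y = (1 - ((L : ℝ) ^ d)⁻¹) * ((L : ℝ) ^ (k * d))⁻¹ := by
  simp only [Pop, Nat.add_sub_cancel, Qop_single_self, add_mul, one_mul, pow_add, mul_inv]
  ring

lemma gammaProp_single_self (m : ℕ) (hm : m ≤ N) (y : Pt L d N) :
    gammaProp L d m hm (Pi.single y 1) y =
      (1 - ((L : ℝ) ^ d)⁻¹) *
        ∑ k ∈ Finset.Icc 1 m, (L : ℝ) ^ (((2 : ℝ) - (d : ℝ)) * ((k : ℝ) - 1)) := by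
  have hL : (0 : ℝ) < L := Nat.cast_pos.mpr (Nat.pos_of_neZero L)
  have hterm (k : ℕ) :
      (L : ℝ) ^ (((2 : ℝ) - (d : ℝ)) * (((k + 1 : ℕ) : ℝ) - 1)) =
        (L : ℝ) ^ (2 * k) * ((L : ℝ) ^ (k * d))⁻¹ := by
    rw [show ((2 : ℝ) - d) * (((k + 1 : ℕ) : ℝ) - 1) = ((2 * k : ℕ) : ℝ) - ((k * d : ℕ) : ℝ) by
        push_cast; ring,
      Real.rpow_sub hL, Real.rpow_natCast, Real.rpow_natCast, div_eq_mul_inv]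
  rw [← Finset.Ico_add_one_right_eq_Icc, Finset.sum_Ico_eq_sum_range, Finset.mul_sum]
  simp only [gammaProp, Pop_succ_single_self, Fin.sum_univ_eq_sum_range
    (fun k => (L : ℝ) ^ (2 * k) * ((1 - ((L : ℝ) ^ d)⁻¹) * ((L : ℝ) ^ (k * d))⁻¹)),
    add_comm 1, hterm]
  exact Finset.sum_congr rfl fun k _ => by ring

end Hier

open Hier in
/-- With `Γ_m = ∑_{k=1}^m L^{2(k-1)} P_k`, for every
`0 ≤ n < N` and every `x ∈ Λ^N`:
`E[ (Q_{N-n}(ξ·Γ_{N-n}ξ))(x) ] = (1 − L^{-d}) ∑_{k=1}^{N-n} L^{(2-d)(k-1)}`;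
in particular `E[ (Q₁(ξ·P₁ξ))(x) ] = 1 − L^{-d}` and
`E[ ξ(x)·(P₁ξ)(x) ] = 1 − L^{-d}`. -/
theorem statement_8 (L d : ℕ) [NeZero L]
    (N n : ℕ) (hn : n < N)
    (Ω : Type) [MeasurableSpace Ω] (P : Measure Ω)
    (ξ : Pt L d N → Ω → ℝ)
    (hmeas : ∀ x, Measurable (ξ x))
    (hgauss : ∀ x, P.map (ξ x) = gaussianReal 0 1)
    (hindep : iIndepFun ξ P) :
    (∀ x : Pt L d N,
      ∫ ω, Qop L d (N - n) (Nat.sub_le N n)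
          (fun y => ξ y ω *
            gammaProp L d (N - n) (Nat.sub_le N n) (fun y' => ξ y' ω) y) x ∂P =
        (1 - ((L : ℝ) ^ d)⁻¹) *
          ∑ k ∈ Finset.Icc 1 (N - n),
            (L : ℝ) ^ (((2 : ℝ) - (d : ℝ)) * ((k : ℝ) - 1))) ∧
    (∀ x : Pt L d N,
      ∫ ω, Qop L d 1 (show 1 ≤ N by omega)
          (fun y => ξ y ω *
            Pop L d 1 (show 1 ≤ N by omega) (fun y' => ξ y' ω) y) x ∂P =
        1 - ((L : ℝ) ^ d)⁻¹) ∧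
    (∀ x : Pt L d N,
      ∫ ω, ξ x ω * Pop L d 1 (show 1 ≤ N by omega) (fun y' => ξ y' ω) x ∂P =
        1 - ((L : ℝ) ^ d)⁻¹) := by
  have hmem (y : Pt L d N) : MemLp (ξ y) 2 P :=
    memLp_two_of_map_eq_gaussianReal (hmeas y).aemeasurable (hgauss y)
  have hprod (y y' : Pt L d N) : Integrable (fun ω => ξ y ω * ξ y' ω) P :=
    (hmem y).integrable_mul (hmem y')
  have hcov := integral_mul_eq_single hmem
    (fun y => integral_eq_zero_of_map_eq_gaussianReal (hmeas y).aemeasurable (hgauss y))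
    (fun y => variance_eq_one_of_map_eq_gaussianReal (hmeas y).aemeasurable (hgauss y))
    (fun _ _ h => hindep.indepFun h)
  have hdiag (A : (Pt L d N → ℝ) →ₗ[ℝ] (Pt L d N → ℝ)) (y : Pt L d N) :
      ∫ ω, ξ y ω * A (fun y' => ξ y' ω) y ∂P = A (Pi.single y 1) y := by
    rw [integral_mul_linearMap_apply A (hprod y), hcov]
  have haverage (A B : (Pt L d N → ℝ) →ₗ[ℝ] (Pt L d N → ℝ)) (x : Pt L d N) :
      ∫ ω, B (fun y => ξ y ω * A (fun y' => ξ y' ω) y) x ∂P =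
        B (fun y => A (Pi.single y 1) y) x := by
    rw [integral_linearMap_apply B (fun y => integrable_mul_linearMap_apply A (hprod y) y)]
    simp_rw [hdiag]
  have h1N : 1 ≤ N := by omega
  refine ⟨fun x => ?_, fun x => ?_, fun x => ?_⟩
  · simpa only [QopLin_apply, gammaPropLin_apply, gammaProp_single_self, Qop_const] using
      haverage (gammaPropLin (N - n) (Nat.sub_le N n)) (QopLin (N - n) (Nat.sub_le N n)) x
  · simpa only [QopLin_apply, PopLin_apply, Pop_succ_single_self 0, zero_mul, pow_zero, inv_one,
      mul_one, Qop_const] using haverage (PopLin 1 h1N) (QopLin 1 h1N) x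
  · simpa only [PopLin_apply, Pop_succ_single_self 0, zero_mul, pow_zero, inv_one, mul_one]
      using hdiag (PopLin 1 h1N) x
end
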